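/- The action of Sp₂(H) on Sp₂⁺(H) given by (g, a) ↦ g a g* is well defined (i.e. g a g* ∈ Sp₂⁺(H)) and transitive: for any X, Y ∈ Sp₂⁺(H), writing X = e^x, Y = e^y with x, y ∈ sp₂(H)_h, the element g = e^{x/2} e^{-y/2} ∈ Sp₂(H) satisfies X = g Y g*. -/

import Mathlib

open scoped RealInnerProductSpace
open ContinuousLinearMap

noncomputable section

variable {ι H : Type*} [NormedAddCommGroup H] [InnerProductSpace ℝ H] [CompleteSpace H]

/-- `x` is a Hilbert-Schmidt operator (with respect to the Hilbert basis `b`). -/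
def IsHS (b : HilbertBasis ι ℝ H) (x : H →L[ℝ] H) : Prop :=
  Summable fun i => ‖x (b i)‖ ^ 2

/-- The Hilbert-Schmidt norm `‖x‖₂`. -/
def hsNorm (b : HilbertBasis ι ℝ H) (x : H →L[ℝ] H) : ℝ :=
  Real.sqrt (∑' i, ‖x (b i)‖ ^ 2)

/-- The trace inner product `⟨x, y⟩ = Tr (y* x)`. -/
def hsInner (b : HilbertBasis ι ℝ H) (x y : H →L[ℝ] H) : ℝ :=
  ∑' i, ⟪x (b i), y (b i)⟫

/-- `J` is a complex structure: `J² = -1` and `J* = -J`. -/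
def IsCplxStruct (J : H →L[ℝ] H) : Prop :=
  J * J = -1 ∧ star J = -J

/-- The symplectic group `Sp(H)`. -/
def Sp (J : H →L[ℝ] H) : Set (H →L[ℝ] H) :=
  {g | IsUnit g ∧ star g * J * g = J}

/-- The restricted symplectic group `Sp₂(H)`. -/
def Sp2 (b : HilbertBasis ι ℝ H) (J : H →L[ℝ] H) : Set (H →L[ℝ] H) :=
  {g | g ∈ Sp J ∧ IsHS b (g - 1)}

/-- The Banach-Lie algebra `sp₂(H) = {x ∈ B₂(H) : xJ = -Jx*}`. -/
def sp2 (b : HilbertBasis ι ℝ H) (J : H →L[ℝ] H) : Set (H →L[ℝ] H) :=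
  {x | IsHS b x ∧ x * J = -(J * star x)}

/-- The Hermitian part of `sp₂(H)`. -/
def sp2h (b : HilbertBasis ι ℝ H) (J : H →L[ℝ] H) : Set (H →L[ℝ] H) :=
  {x ∈ sp2 b J | IsSelfAdjoint x}

/-- The anti-Hermitian part of `sp₂(H)`. -/
def sp2ah (b : HilbertBasis ι ℝ H) (J : H →L[ℝ] H) : Set (H →L[ℝ] H) :=
  {x ∈ sp2 b J | star x = -x}

/-- The positive part `Sp₂⁺(H)` of the restricted symplectic group. -/
def Sp2pos (b : HilbertBasis ι ℝ H) (J : H →L[ℝ] H) : Set (H →L[ℝ] H) :=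
  {g ∈ Sp2 b J | g.IsPositive}

/-- The restricted unitary group `U₂(H_J)` of unitaries commuting with `J` which are
Hilbert-Schmidt perturbations of the identity. -/
def U2J (b : HilbertBasis ι ℝ H) (J : H →L[ℝ] H) : Set (H →L[ℝ] H) :=
  {u | star u * u = 1 ∧ u * star u = 1 ∧ u * J = J * u ∧ IsHS b (u - 1)}

open scoped Classical in
/-- The positive square root `a^{1/2}` of a positive operator (junk value otherwise). -/
def psqrt (a : H →L[ℝ] H) : H →L[ℝ] H :=
  if h : ∃ s : H →L[ℝ] H, s.IsPositive ∧ s * s = a then h.choose else 0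

/-- A piecewise smooth curve parametrized on `[0,1]`. -/
def PiecewiseSmooth (α : ℝ → (H →L[ℝ] H)) : Prop :=
  ContinuousOn α (Set.Icc 0 1) ∧ ∃ n : ℕ, ∃ t : Fin (n + 1) → ℝ,
    StrictMono t ∧ t 0 = 0 ∧ t (Fin.last n) = 1 ∧
    ∀ i : Fin n, ContDiffOn ℝ 1 α (Set.Icc (t i.castSucc) (t i.succ))

/-- Length of a curve with respect to a metric `F` on tangent vectors. -/
def lengthWith (F : (H →L[ℝ] H) → (H →L[ℝ] H) → ℝ) (α : ℝ → (H →L[ℝ] H)) : ℝ :=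
  ∫ t in (0:ℝ)..1, F (α t) (deriv α t)

/-- Piecewise smooth curves inside `S` joining `p` to `q`. -/
def pathsIn (S : Set (H →L[ℝ] H)) (p q : H →L[ℝ] H) : Set (ℝ → (H →L[ℝ] H)) :=
  {α | PiecewiseSmooth α ∧ (∀ t ∈ Set.Icc (0:ℝ) 1, α t ∈ S) ∧ α 0 = p ∧ α 1 = q}

/-- The geodesic distance in `S` associated to the metric `F`. -/
def gdist (S : Set (H →L[ℝ] H)) (F : (H →L[ℝ] H) → (H →L[ℝ] H) → ℝ)
    (p q : H →L[ℝ] H) : ℝ :=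
  sInf (lengthWith F '' pathsIn S p q)

/-- The left invariant metric `I(g,v) = ‖g⁻¹ v‖₂`. -/
def leftMet (b : HilbertBasis ι ℝ H) : (H →L[ℝ] H) → (H →L[ℝ] H) → ℝ :=
  fun g v => hsNorm b (Ring.inverse g * v)

/-- The metric of positive operators `𝔭(a,x) = ‖a^{-1/2} x a^{-1/2}‖₂`. -/
def posMet (b : HilbertBasis ι ℝ H) : (H →L[ℝ] H) → (H →L[ℝ] H) → ℝ :=
  fun a x => hsNorm b (Ring.inverse (psqrt a) * x * Ring.inverse (psqrt a))

/-- The ambient metric `𝔭_amb(g,x) = ‖x‖₂`. -/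
def ambMet (b : HilbertBasis ι ℝ H) : (H →L[ℝ] H) → (H →L[ℝ] H) → ℝ :=
  fun _ x => hsNorm b x

/-! The Hilbert-Schmidt operators form a two-sided ideal closed under adjoints, so the condition
`g - 1 ∈ B₂(H)` survives products (`gh - 1 = g(h - 1) + (g - 1)`) and adjoints; since `J⁻¹ = -J`,
`Sp(H)` is a group closed under adjoints, hence so is `Sp₂(H)`, and `g a g*` stays in `Sp₂⁺(H)`.
For transitivity, `exp x - 1` is `x` times a convergent power series in `x`, hence Hilbert-Schmidt,
and `exp x` is symplectic because `J` intertwines `x` and `-x`; the identity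
`e^x = (e^{x/2} e^{-y/2}) e^y (e^{-y/2} e^{x/2})` is then pure algebra. -/

open NormedSpace

section HilbertSchmidt

variable {E : Type*} [NormedAddCommGroup E] [InnerProductSpace ℝ E] {b : HilbertBasis ι ℝ E}
  {x y : E →L[ℝ] E}

theorem HilbertBasis.hasSum_real_inner_sq (b : HilbertBasis ι ℝ E) (v : E) :
    HasSum (fun i => ⟪v, b i⟫ ^ 2) (‖v‖ ^ 2) := by
  simpa [real_inner_comm, sq, real_inner_self_eq_norm_sq] using b.hasSum_inner_mul_inner v v

theorem isHS_iff_summable_inner_sq :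
    IsHS b x ↔ Summable fun p : ι × ι => ⟪x (b p.1), b p.2⟫ ^ 2 := by
  rw [summable_prod_of_nonneg fun _ => sq_nonneg _]
  simp only [(b.hasSum_real_inner_sq _).summable, (b.hasSum_real_inner_sq _).tsum_eq,
    implies_true, true_and]
  rfl

theorem IsHS.add (hx : IsHS b x) (hy : IsHS b y) : IsHS b (x + y) := by
  refine .of_nonneg_of_le (fun _ => sq_nonneg _) (fun i => ?_) ((Summable.add hx hy).mul_left 2)
  have := parallelogram_law_with_norm ℝ (x (b i)) (y (b i))
  simp only [add_apply]
  nlinarith [mul_self_nonneg ‖x (b i) - y (b i)‖]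

theorem IsHS.smul (hx : IsHS b x) (c : ℝ) : IsHS b (c • x) := by
  simpa only [IsHS, smul_apply, norm_smul, mul_pow] using Summable.mul_left (‖c‖ ^ 2) hx

theorem IsHS.neg (hx : IsHS b x) : IsHS b (-x) := by
  simpa only [IsHS, neg_apply, norm_neg] using hx

theorem IsHS.mul_left (hx : IsHS b x) (g : E →L[ℝ] E) : IsHS b (g * x) := by
  refine .of_nonneg_of_le (fun _ => sq_nonneg _) (fun i => ?_) (Summable.mul_left (‖g‖ ^ 2) hx)
  rw [← mul_pow]
  exact pow_le_pow_left₀ (norm_nonneg _) (g.le_opNorm _) 2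

theorem IsHS.mul_sub_one {g h : E →L[ℝ] E} (hg : IsHS b (g - 1)) (hh : IsHS b (h - 1)) :
    IsHS b (g * h - 1) := by
  rw [show g * h - 1 = g * (h - 1) + (g - 1) by noncomm_ring]
  exact (hh.mul_left g).add hg

variable [CompleteSpace E]

theorem IsHS.star (hx : IsHS b x) : IsHS b (star x) := by
  rw [isHS_iff_summable_inner_sq] at hx ⊢
  refine ((Equiv.prodComm ι ι).summable_iff.2 hx).congr fun p => ?_
  simp [star_eq_adjoint, adjoint_inner_left, real_inner_comm]

theorem IsHS.mul_right (hx : IsHS b x) (g : E →L[ℝ] E) : IsHS b (x * g) := by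
  simpa using (hx.star.mul_left (Star.star g)).star

end HilbertSchmidt

section BanachAlgebra

variable {𝔸 : Type*} [NormedRing 𝔸] [NormedAlgebra ℝ 𝔸] [CompleteSpace 𝔸]

theorem summable_inv_factorial_succ_smul_pow (a : 𝔸) :
    Summable fun n : ℕ => ((n + 1).factorial : ℝ)⁻¹ • a ^ n := by
  refine .of_norm_bounded (norm_expSeries_summable' (𝕂 := ℝ) a) fun n => ?_
  rw [norm_smul, norm_smul, norm_inv, norm_inv, Real.norm_natCast, Real.norm_natCast]
  gcongr
  exact n.le_succ

theorem exp_sub_one_eq_mul_tsum (a : 𝔸) :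
    exp a - 1 = a * ∑' n : ℕ, ((n + 1).factorial : ℝ)⁻¹ • a ^ n := by
  rw [congrFun (exp_eq_tsum ℝ) a, (expSeries_summable' (𝕂 := ℝ) a).tsum_eq_zero_add,
    ← (summable_inv_factorial_succ_smul_pow a).tsum_mul_left]
  simp [← pow_succ']

theorem exp_half_smul_mul_self (z : 𝔸) :
    exp ((1/2 : ℝ) • z) * exp ((1/2 : ℝ) • z) = exp z := by
  let +nondep : NormedAlgebra ℚ 𝔸 := .restrictScalars ℚ ℝ 𝔸
  rw [← exp_add_of_commute (.refl _), ← add_smul]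
  norm_num

theorem exp_neg_half_smul_mul_exp_mul_self (z : 𝔸) :
    exp (-((1/2 : ℝ) • z)) * exp z * exp (-((1/2 : ℝ) • z)) = 1 := by
  let +nondep : NormedAlgebra ℚ 𝔸 := .restrictScalars ℚ ℝ 𝔸
  have hz : Commute (-((1/2 : ℝ) • z)) z := ((Commute.refl z).smul_left _).neg_left
  rw [← exp_add_of_commute hz, ← exp_add_of_commute ((Commute.refl _).add_left hz.symm),
    ← exp_zero (𝔸 := 𝔸)]
  congr 1
  module

variable [StarRing 𝔸] [ContinuousStar 𝔸] [StarModule ℝ 𝔸]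

theorem exp_eq_mul_exp_mul_star {x y : 𝔸} (hx : IsSelfAdjoint x) (hy : IsSelfAdjoint y) :
    exp x = exp ((1/2 : ℝ) • x) * exp (-((1/2 : ℝ) • y)) * exp y *
      star (exp ((1/2 : ℝ) • x) * exp (-((1/2 : ℝ) • y))) := by
  set u := (1/2 : ℝ) • x
  set v := (1/2 : ℝ) • y
  have hstar : star (exp u * exp (-v)) = exp (-v) * exp u := by
    rw [star_mul, ((IsSelfAdjoint.all _).smul hy).neg.exp.star_eq,
      ((IsSelfAdjoint.all _).smul hx).exp.star_eq]
  calc exp x = exp u * (exp (-v) * exp y * exp (-v)) * exp u := by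
        rw [exp_neg_half_smul_mul_exp_mul_self, mul_one, exp_half_smul_mul_self]
    _ = _ := by
        rw [hstar]
        simp only [mul_assoc]

end BanachAlgebra

theorem ContinuousLinearMap.IsPositive.mul_mul_star {𝕜 E : Type*} [RCLike 𝕜]
    [NormedAddCommGroup E] [InnerProductSpace 𝕜 E] [CompleteSpace E] {a : E →L[𝕜] E}
    (ha : a.IsPositive) (g : E →L[𝕜] E) : (g * a * star g).IsPositive := by
  simpa only [star_eq_adjoint, mul_def, comp_assoc] using ha.conj_adjoint g

section Symplectic

variable {J g h : H →L[ℝ] H}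

theorem Sp.mul_mem (hg : g ∈ Sp J) (hh : h ∈ Sp J) : g * h ∈ Sp J := by
  refine ⟨hg.1.mul hh.1, ?_⟩
  calc star (g * h) * J * (g * h) = star h * (star g * J * g) * h := by
        simp only [star_mul, mul_assoc]
    _ = J := by rw [hg.2, hh.2]

theorem Sp.star_mem (hJ : IsCplxStruct J) (hg : g ∈ Sp J) : star g ∈ Sp J := by
  obtain ⟨⟨u, rfl⟩, hu⟩ := hg
  refine ⟨u.isUnit.star, ?_⟩
  have hJJ : J * -J = 1 := by rw [mul_neg, hJ.1, neg_neg]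
  have hu' : star (u : H →L[ℝ] H) * J = J * ↑u⁻¹ := by
    calc star (u : H →L[ℝ] H) * J = star ↑u * J * ↑u * ↑u⁻¹ := by
          rw [mul_assoc _ (u : H →L[ℝ] H), Units.mul_inv, mul_one]
      _ = J * ↑u⁻¹ := by rw [hu]
  calc star (star (u : H →L[ℝ] H)) * J * star ↑u
      = ↑u * J * (star ↑u * J) * -J := by
        rw [star_star, mul_assoc _ (star _ * J), mul_assoc (star _), hJJ, mul_one]
    _ = ↑u * (J * J) * ↑u⁻¹ * -J := by
        rw [hu']
        simp only [mul_assoc]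
    _ = J := by simp [hJ.1]

theorem exp_mem_Sp {z : H →L[ℝ] H} (hz : star z * J = -(J * z)) : exp z ∈ Sp J := by
  let +nondep : NormedAlgebra ℚ (H →L[ℝ] H) := .restrictScalars ℚ ℝ (H →L[ℝ] H)
  have hJz : SemiconjBy J z (-star z) := by
    rw [SemiconjBy, neg_mul, hz, neg_neg]
  refine ⟨isUnit_exp z, ?_⟩
  simpa [star_exp] using hJz.exp_neg_mul_mul_exp_eq_self

variable {b : HilbertBasis ι ℝ H} {x : H →L[ℝ] H}

theorem Sp2.mul_mem (hg : g ∈ Sp2 b J) (hh : h ∈ Sp2 b J) : g * h ∈ Sp2 b J :=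
  ⟨Sp.mul_mem hg.1 hh.1, hg.2.mul_sub_one hh.2⟩

theorem Sp2.star_mem (hJ : IsCplxStruct J) (hg : g ∈ Sp2 b J) : star g ∈ Sp2 b J :=
  ⟨Sp.star_mem hJ hg.1, by simpa using hg.2.star⟩

theorem smul_mem_sp2h (c : ℝ) (hx : x ∈ sp2h b J) : c • x ∈ sp2h b J := by
  refine ⟨⟨hx.1.1.smul c, ?_⟩, (IsSelfAdjoint.all c).smul hx.2⟩
  rw [smul_mul_assoc, hx.1.2, star_smul, star_trivial c, mul_smul_comm, smul_neg]

theorem neg_mem_sp2h (hx : x ∈ sp2h b J) : -x ∈ sp2h b J := by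
  refine ⟨⟨hx.1.1.neg, ?_⟩, hx.2.neg⟩
  rw [neg_mul, hx.1.2, star_neg, mul_neg]

theorem exp_mem_Sp2 (hx : x ∈ sp2h b J) : exp x ∈ Sp2 b J := by
  refine ⟨exp_mem_Sp ?_, ?_⟩
  · rw [hx.2.star_eq, hx.1.2, hx.2.star_eq]
  · rw [exp_sub_one_eq_mul_tsum]
    exact hx.1.1.mul_right _

end Symplectic

/-- the action `(g,a) ↦ g a g*` of `Sp₂(H)` on `Sp₂⁺(H)` is well
defined and transitive. -/
theorem action_welldefined_transitive (b : HilbertBasis ι ℝ H) (J : H →L[ℝ] H)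
    (hJ : IsCplxStruct J) :
    (∀ g ∈ Sp2 b J, ∀ a ∈ Sp2pos b J, g * a * star g ∈ Sp2pos b J) ∧
    (∀ x ∈ sp2h b J, ∀ y ∈ sp2h b J,
      NormedSpace.exp ((1/2 : ℝ) • x) * NormedSpace.exp (-((1/2 : ℝ) • y)) ∈ Sp2 b J ∧
      NormedSpace.exp x =
        (NormedSpace.exp ((1/2 : ℝ) • x) * NormedSpace.exp (-((1/2 : ℝ) • y))) *
          NormedSpace.exp y *
          star (NormedSpace.exp ((1/2 : ℝ) • x) * NormedSpace.exp (-((1/2 : ℝ) • y)))) := by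
  refine ⟨fun g hg a ha => ⟨Sp2.mul_mem (Sp2.mul_mem hg ha.1) (Sp2.star_mem hJ hg), ?_⟩,
    fun x hx y hy => ⟨?_, exp_eq_mul_exp_mul_star hx.2 hy.2⟩⟩
  · exact ha.2.mul_mul_star g
  · exact Sp2.mul_mem (exp_mem_Sp2 (smul_mem_sp2h _ hx))
      (exp_mem_Sp2 (neg_mem_sp2h (smul_mem_sp2h _ hy)))

end
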